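/- arXiv:2501.00123 — 2 statements merged into one kernel-verified Lean document; each statement's English description precedes it below -/
import Mathlib

section
/- In any central-by-abelian loop, the identity [a,b,c][b,c,a][c,a,b] = [bc,a][ab,c][ac,b] holds for all a,b,c. -/
universe u

class Loop (L : Type u) extends Mul L, One L where
  ldiv : L → L → L
  rdiv : L → L → L
  mul_ldiv : ∀ a b : L, a * ldiv a b = b
  ldiv_mul : ∀ a b : L, ldiv a (a * b) = b
  rdiv_mul : ∀ a b : L, rdiv b a * a = b
  mul_rdiv : ∀ a b : L, rdiv (b * a) a = b
  one_mul : ∀ a : L, 1 * a = a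
  mul_one : ∀ a : L, a * 1 = a

section Magma
variable {M : Type u} (mul : M → M → M)

/-- Left nucleus of a magma. -/
def leftNucS : Set M := {a | ∀ x y, mul (mul a x) y = mul a (mul x y)}
/-- Middle nucleus of a magma. -/
def midNucS : Set M := {a | ∀ x y, mul (mul x a) y = mul x (mul a y)}
/-- Right nucleus of a magma. -/
def rightNucS : Set M := {a | ∀ x y, mul (mul x y) a = mul x (mul y a)}
/-- Nucleus of a magma. -/
def nucS : Set M := leftNucS mul ∩ midNucS mul ∩ rightNucS mul
/-- Commutant (commutative center) of a magma. -/
def commutantS : Set M := {a | ∀ x, mul a x = mul x a}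
/-- Center of a magma: the commutant intersected with the nucleus. -/
def centerS : Set M := commutantS mul ∩ nucS mul
end Magma

namespace Loop
variable {L : Type u} [Loop L]

/-- The left inverse `a^λ`, satisfying `a^λ * a = 1`. -/
def linv (a : L) : L := Loop.rdiv 1 a
/-- The right inverse `a^ρ`, satisfying `a * a^ρ = 1`. -/
def rinv (a : L) : L := Loop.ldiv a 1
/-- The commutator `[a,b]`, defined by `a*b = (b*a)*[a,b]`. -/
def comm (a b : L) : L := Loop.ldiv (b*a) (a*b)
/-- The associator `[a,b,c]`, defined by `(a*b)*c = (a*(b*c))*[a,b,c]`. -/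
def assoc (a b c : L) : L := Loop.ldiv (a*(b*c)) ((a*b)*c)

end Loop

/-- The nucleus of a loop. -/
abbrev LNuc (L : Type u) [Loop L] : Set L := nucS (fun x y : L => x * y)
/-- The commutant of a loop. -/
abbrev LCommutant (L : Type u) [Loop L] : Set L := commutantS (fun x y : L => x * y)
/-- The center of a loop. -/
abbrev LCenter (L : Type u) [Loop L] : Set L := centerS (fun x y : L => x * y)

/-!
Central elements of a loop form a commutative monoid, and right multiplication by them is an
action of it. Put `w = [c,a][b,c,a][ab,c]`. Expanding `(ac)b` through `ac = (ca)[a,c]`, the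
associators `[c,a,b], [a,b,c]` and the commutator `[ab,c]`, and using `[a,c][c,a] = 1`, gives
`(ac)b · w = a(bc) · [a,b,c][b,c,a][c,a,b]`; expanding it through the commutators `[ac,b], [a,c],
[bc,a]` and the associator `[b,c,a]` gives `(ac)b · w = a(bc) · [bc,a][ab,c][ac,b]`. Cancelling
`a(bc)` on the left yields the identity.
-/

namespace Loop

variable {L : Type u} [Loop L]

theorem mul_left_cancel {u x y : L} (h : u * x = u * y) : x = y := by
  simpa only [ldiv_mul] using congrArg (ldiv u) h

theorem mul_eq_mul_mul_comm (x y : L) : x * y = y * x * comm x y :=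
  (mul_ldiv _ _).symm

section Center

variable {z w : L}

theorem mul_comm_of_mem_center (hz : z ∈ LCenter L) (x : L) : z * x = x * z := hz.1 x

theorem mul_assoc_of_mem_center_left (hz : z ∈ LCenter L) (x y : L) :
    z * x * y = z * (x * y) := hz.2.1.1 x y

theorem mul_assoc_of_mem_center_mid (hz : z ∈ LCenter L) (x y : L) :
    x * z * y = x * (z * y) := hz.2.1.2 x y

theorem mul_assoc_of_mem_center_right (hz : z ∈ LCenter L) (x y : L) :
    x * y * z = x * (y * z) := hz.2.2 x y

theorem one_mem_center : (1 : L) ∈ LCenter L := by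
  refine ⟨fun x => ?_, ⟨fun x y => ?_, fun x y => ?_⟩, fun x y => ?_⟩ <;>
    simp only [one_mul, mul_one]

theorem mul_mem_center (hz : z ∈ LCenter L) (hw : w ∈ LCenter L) : z * w ∈ LCenter L := by
  have zl := mul_assoc_of_mem_center_left hz
  have zm := mul_assoc_of_mem_center_mid hz
  have wm := mul_assoc_of_mem_center_mid hw
  have wr := mul_assoc_of_mem_center_right hw
  refine ⟨fun x => ?_, ⟨fun x y => ?_, fun x y => ?_⟩, fun x y => ?_⟩
  · show z * w * x = x * (z * w)
    rw [zl, mul_comm_of_mem_center hw, ← zl, mul_comm_of_mem_center hz, zm]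
  · show z * w * x * y = z * w * (x * y)
    rw [zl, zl, mul_assoc_of_mem_center_left hw, ← zl]
  · show x * (z * w) * y = x * (z * w * y)
    rw [← zm, wm, zm, ← zl]
  · show x * y * (z * w) = x * (y * (z * w))
    rw [← wr, mul_assoc_of_mem_center_right hz, wr, wr]

end Center

instance : CommMonoid (LCenter L) where
  mul z w := ⟨z * w, mul_mem_center z.2 w.2⟩
  one := ⟨1, one_mem_center⟩
  mul_assoc z w v := Subtype.ext (mul_assoc_of_mem_center_left z.2 w v)
  one_mul z := Subtype.ext (one_mul (z : L))
  mul_one z := Subtype.ext (mul_one (z : L))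
  mul_comm z w := Subtype.ext (mul_comm_of_mem_center z.2 w)

theorem mul_mul_center (x : L) (z w : LCenter L) : x * z * w = x * ↑(z * w) :=
  mul_assoc_of_mem_center_mid z.2 x w

theorem mul_center_mul_comm (x y : L) (z : LCenter L) : x * z * y = x * y * z := by
  rw [mul_assoc_of_mem_center_mid z.2, mul_comm_of_mem_center z.2, mul_assoc_of_mem_center_right z.2]

theorem comm_mul_comm_eq_one {x y : L} (h : comm x y ∈ LCenter L) :
    comm y x * comm x y = 1 := by
  refine (mul_left_cancel (u := x * y) ?_).symm
  calc x * y * 1 = y * x * comm x y := by rw [mul_one, ← mul_eq_mul_mul_comm]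
    _ = x * y * comm y x * comm x y := by rw [← mul_eq_mul_mul_comm y x]
    _ = x * y * (comm y x * comm x y) := mul_assoc_of_mem_center_right h _ _

section CentralByAbelian

variable (hcomm : ∀ a b : L, comm a b ∈ LCenter L) (hassoc : ∀ a b c : L, assoc a b c ∈ LCenter L)

def commCenter (a b : L) : LCenter L := ⟨comm a b, hcomm a b⟩

def assocCenter (a b c : L) : LCenter L := ⟨assoc a b c, hassoc a b c⟩

theorem mul_eq_mul_mul_commCenter (x y : L) : x * y = y * x * ↑(commCenter hcomm x y) :=
  mul_eq_mul_mul_comm x y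

theorem mul_mul_eq_mul_mul_mul_assocCenter (x y z : L) :
    x * y * z = x * (y * z) * ↑(assocCenter hassoc x y z) :=
  (mul_ldiv _ _).symm

theorem mul_mul_eq_mul_mul_assocCenter_mul_commCenter (a b c : L) :
    a * c * b = c * (a * b) * ↑(assocCenter hassoc c a b * commCenter hcomm a c) :=
  calc a * c * b = c * a * commCenter hcomm a c * b := by rw [mul_eq_mul_mul_commCenter hcomm a c]
    _ = c * a * b * commCenter hcomm a c := mul_center_mul_comm _ _ _
    _ = c * (a * b) * assocCenter hassoc c a b * commCenter hcomm a c := by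
      rw [mul_mul_eq_mul_mul_mul_assocCenter hassoc c a b]
    _ = c * (a * b) * ↑(assocCenter hassoc c a b * commCenter hcomm a c) := mul_mul_center _ _ _

theorem mul_mul_eq_mul_mul_commCenter_mul_commCenter (a b c : L) :
    a * c * b = b * (c * a) * ↑(commCenter hcomm (a * c) b * commCenter hcomm a c) :=
  calc a * c * b = b * (c * a * commCenter hcomm a c) * commCenter hcomm (a * c) b := by
        rw [mul_eq_mul_mul_commCenter hcomm (a * c) b, mul_eq_mul_mul_commCenter hcomm a c]
    _ = b * (c * a) * commCenter hcomm a c * commCenter hcomm (a * c) b := by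
      rw [← mul_assoc_of_mem_center_right (commCenter hcomm a c).2 b (c * a)]
    _ = b * (c * a) * ↑(commCenter hcomm (a * c) b * commCenter hcomm a c) := by
      rw [mul_mul_center, _root_.mul_comm]

theorem assocCenter_mul_assocCenter_mul_assocCenter (a b c : L) :
    assocCenter hassoc a b c * assocCenter hassoc b c a * assocCenter hassoc c a b =
      commCenter hcomm (b * c) a * commCenter hcomm (a * b) c * commCenter hcomm (a * c) b := by
  set A₁ := assocCenter hassoc a b c
  set A₂ := assocCenter hassoc b c a
  set A₃ := assocCenter hassoc c a b
  set C₁ := commCenter hcomm (b * c) a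
  set C₂ := commCenter hcomm (a * b) c
  set C₃ := commCenter hcomm (a * c) b
  set k := commCenter hcomm a c
  set k' := commCenter hcomm c a
  have hk : k * k' = 1 := Subtype.ext (comm_mul_comm_eq_one (hcomm c a))
  have hcancel (u v : LCenter L) : u * k * (k' * v) = u * v := by
    rw [_root_.mul_assoc, ← _root_.mul_assoc k, hk, _root_.one_mul]
  refine Subtype.ext (mul_left_cancel (u := a * (b * c)) ?_)
  calc a * (b * c) * ↑(A₁ * A₂ * A₃) = a * (b * c) * A₁ * ↑(A₃ * A₂) := by
        rw [mul_mul_center]; congr 2; ac_rfl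
    _ = c * (a * b) * C₂ * ↑(A₃ * A₂) := by
        rw [← mul_mul_eq_mul_mul_mul_assocCenter, mul_eq_mul_mul_commCenter hcomm (a * b) c]
    _ = c * (a * b) * ↑(A₃ * k * (k' * (A₂ * C₂))) := by
        rw [mul_mul_center, hcancel]; congr 2; ac_rfl
    _ = a * c * b * ↑(k' * (A₂ * C₂)) := by
        rw [mul_mul_eq_mul_mul_assocCenter_mul_commCenter hcomm hassoc a b c, mul_mul_center]
    _ = b * (c * a) * ↑(C₃ * k * (k' * (A₂ * C₂))) := by
        rw [mul_mul_eq_mul_mul_commCenter_mul_commCenter hcomm a b c, mul_mul_center]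
    _ = b * (c * a) * A₂ * ↑(C₃ * C₂) := by
        rw [hcancel, mul_mul_center]; congr 2; ac_rfl
    _ = a * (b * c) * C₁ * ↑(C₃ * C₂) := by
        rw [← mul_mul_eq_mul_mul_mul_assocCenter, mul_eq_mul_mul_commCenter hcomm (b * c) a]
    _ = a * (b * c) * ↑(C₁ * C₂ * C₃) := by
        rw [mul_mul_center]; congr 2; ac_rfl

end CentralByAbelian

end Loop

/-- In any central-by-abelian loop,
`[a,b,c][b,c,a][c,a,b] = [bc,a][ab,c][ac,b]`. -/
theorem stmt3 {L : Type u} [Loop L]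
    (hcomm : ∀ a b : L, Loop.comm a b ∈ LCenter L)
    (hassoc : ∀ a b c : L, Loop.assoc a b c ∈ LCenter L)
    (a b c : L) :
    (Loop.assoc a b c * Loop.assoc b c a) * Loop.assoc c a b =
      (Loop.comm (b*c) a * Loop.comm (a*b) c) * Loop.comm (a*c) b :=
  congrArg Subtype.val (Loop.assocCenter_mul_assocCenter_mul_assocCenter hcomm hassoc a b c)
end

section
/- Let * be a normal involution on a loop L, i.e., ν(x) = x^*x is central for all x. Then x^* = ν(x)x^λ = ν(x^*)x^ρ for all x ∈ L, where x^λ and x^ρ are the left and right inverses. Moreover, [x,x^*] = 1 for every x if and only if ν(x^*) = ν(x) for every x, if and only if the inverse is well-defined (x^λ = x^ρ for all x). -/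
universe u

/-! Since `ν(x) = x^* x` lies in the left nucleus, `(ν(x) x^λ) x = ν(x)`, and cancelling `x` gives
`x^* = ν(x) x^λ`. As `x^** = x`, also `x x^* = ν(x^*)`, and centrality of `ν(x^*)` gives
`x (ν(x^*) x^ρ) = ν(x^*)`, hence `x^* = ν(x^*) x^ρ`. Comparing the two expressions for `x^*` and
cancelling shows that `ν(x^*) = ν(x)` holds exactly when `x^λ = x^ρ`. -/

namespace Loop
variable {L : Type u} [Loop L]

theorem cancel_left {a b c : L} (h : a * b = a * c) : b = c := by
  simpa only [ldiv_mul] using congrArg (ldiv a) h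

theorem cancel_right {a b c : L} (h : a * c = b * c) : a = b := by
  simpa only [mul_rdiv] using congrArg (rdiv · c) h

theorem linv_mul (a : L) : linv a * a = 1 := rdiv_mul a 1

theorem mul_rinv (a : L) : a * rinv a = 1 := mul_ldiv a 1

theorem eq_mul_linv_of_mul_eq {c x y : L} (hc : c ∈ leftNucS (fun a b : L => a * b))
    (h : y * x = c) : y = c * linv x :=
  cancel_right <| calc
    y * x = c := h
    _ = c * (linv x * x) := by rw [linv_mul, Loop.mul_one]
    _ = c * linv x * x := (hc (linv x) x).symm

theorem eq_mul_rinv_of_mul_eq {c x y : L} (hc : c ∈ LCenter L) (h : x * y = c) :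
    y = c * rinv x := by
  obtain ⟨hcomm, ⟨hleft, hmid⟩, -⟩ := hc
  refine cancel_left <| calc
    x * y = c := h
    _ = c * (x * rinv x) := by rw [mul_rinv, Loop.mul_one]
    _ = c * x * rinv x := (hleft x (rinv x)).symm
    _ = x * c * rinv x := by rw [show c * x = x * c from hcomm x]
    _ = x * (c * rinv x) := hmid x (rinv x)

end Loop

theorem stmt8_general {L : Type u} [Loop L] (star : L → L)
    (hstar2 : ∀ a : L, star (star a) = a)
    (hnorm : ∀ x : L, star x * x ∈ LCenter L) :
    (∀ x : L, star x = (star x * x) * Loop.linv x ∧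
      star x = (star (star x) * star x) * Loop.rinv x) ∧
    ((∀ x : L, x * star x = star x * x) ↔
      (∀ x : L, star (star x) * star x = star x * x)) ∧
    ((∀ x : L, star (star x) * star x = star x * x) ↔
      (∀ x : L, Loop.linv x = Loop.rinv x)) := by
  have hl (x : L) : star x = (star x * x) * Loop.linv x :=
    Loop.eq_mul_linv_of_mul_eq (hnorm x).2.1.1 rfl
  have hr (x : L) : star x = (star (star x) * star x) * Loop.rinv x :=
    Loop.eq_mul_rinv_of_mul_eq (hnorm (star x)) (by rw [hstar2])
  refine ⟨fun x => ⟨hl x, hr x⟩, by simp only [hstar2], fun h x => ?_, fun h x => ?_⟩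
  · exact Loop.cancel_left ((hl x).symm.trans (h x ▸ hr x))
  · exact Loop.cancel_right ((hr x).symm.trans (h x ▸ hl x))

/-- For a normal involution (`ν(x) = x^*x` central): `x^* = ν(x)x^λ = ν(x^*)x^ρ`;
moreover `x` commutes with `x^*` for all `x` iff `ν(x^*) = ν(x)` for all `x`,
iff the inverse is well-defined. -/
theorem stmt8 {L : Type u} [Loop L] (star : L → L)
    (hstar2 : ∀ a : L, star (star a) = a)
    (hanti : ∀ a b : L, star (a * b) = star b * star a)
    (hnorm : ∀ x : L, star x * x ∈ LCenter L) :
    (∀ x : L, star x = (star x * x) * Loop.linv x ∧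
      star x = (star (star x) * star x) * Loop.rinv x) ∧
    ((∀ x : L, x * star x = star x * x) ↔
      (∀ x : L, star (star x) * star x = star x * x)) ∧
    ((∀ x : L, star (star x) * star x = star x * x) ↔
      (∀ x : L, Loop.linv x = Loop.rinv x)) :=
  stmt8_general star hstar2 hnorm
end
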